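/- arXiv:1810.10295 — 2 statements merged into one kernel-verified Lean document; each statement's English description precedes it below -/
import Mathlib

section
/- Let G be an abelian group and let V be a two-sided invariant and (-I)-invariant linear space of complex-valued functions on G. Let f, g, h : G → ℂ be functions such that f and h are linearly independent modulo V, the odd part h^o of h does not belong to V, and the odd part f^o of f is not identically zero. Suppose that for every y ∈ G the functions x ↦ f(x−y) − f(x)g(y) − g(x)f(y) − h(x)h(y) and x ↦ f(x−y) − f(y−x) belong to V. Then there exist a constant η ∈ ℂ and a function φ ∈ V with φ(−x) = φ(x) for all x ∈ G such that g^e = η·f^e + φ. -/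
/-!
Modulo `V`, replacing `x` by `-x` and `y` by `-y` in the functional equation and using that
`x ↦ f (x - y)` is even modulo `V` shows that, for every `a`,
`gᵒ(a) fᵉ + fᵒ(a) gᵉ + hᵒ(a) hᵉ ∈ V`.
Since `fᵒ ∈ V` but `hᵒ ∉ V`, the vectors `fᵒ` and `hᵒ` are not proportional, so some
`2 × 2` minor `fᵒ(a) hᵒ(b) - fᵒ(b) hᵒ(a)` is nonzero; eliminating `hᵉ` between the relations
for `a` and `b` expresses `gᵉ` as a multiple of `fᵉ` modulo `V`.
-/

section

variable {K : Type*} [Field K]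

theorem exists_mul_sub_mul_ne_zero {ι : Type*} {q r : ι → K} (hq : q ≠ 0)
    (hr : ∀ c : K, r ≠ c • q) :
    ∃ i j, q i * r j - q j * r i ≠ 0 := by
  obtain ⟨i, hi⟩ := Function.ne_iff.mp hq
  refine ⟨i, ?_⟩
  by_contra! hminor
  refine hr (r i / q i) (funext fun j => ?_)
  rw [Pi.smul_apply, smul_eq_mul, div_mul_eq_mul_div, eq_div_iff hi]
  linear_combination hminor j

theorem exists_sub_smul_mem_of_forall_add_smul_mem {ι M : Type*} [AddCommGroup M] [Module K M]
    {V : Submodule K M} {u v w : M} {p q r : ι → K} (hV : ∀ i, p i • u + q i • v + r i • w ∈ V)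
    {i j : ι} (hij : q i * r j - q j * r i ≠ 0) :
    ∃ η : K, v - η • u ∈ V := by
  refine ⟨-(p i * r j - p j * r i) / (q i * r j - q j * r i), ?_⟩
  have hw_eliminated := V.sub_mem (V.smul_mem (r j) (hV i)) (V.smul_mem (r i) (hV j))
  convert V.smul_mem (q i * r j - q j * r i)⁻¹ hw_eliminated using 1
  match_scalars <;> field_simp
  ring

variable {G : Type*} [AddCommGroup G]

def evenPart (f : G → K) : G → K := fun x => (f x + f (-x)) / 2

def oddPart (f : G → K) : G → K := fun x => (f x - f (-x)) / 2

theorem evenPart_neg (f : G → K) (x : G) : evenPart f (-x) = evenPart f x := by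
  simp only [evenPart, neg_neg, add_comm]

theorem oddPart_mem_of_forall_sub_swap_mem {V : Submodule K (G → K)} {f : G → K}
    (hswap : ∀ y : G, (fun x => f (x - y) - f (y - x)) ∈ V) : oddPart f ∈ V := by
  convert V.smul_mem (1 / 2 : K) (hswap 0) using 1
  funext x
  simp only [oddPart, Pi.smul_apply, smul_eq_mul, sub_zero, zero_sub]
  ring

theorem oddPart_smul_evenPart_add_mem {V : Submodule K (G → K)}
    (hVneg : ∀ f : G → K, f ∈ V → (fun x => f (-x)) ∈ V) {f g h : G → K}
    (h1 : ∀ y : G, (fun x => f (x - y) - f x * g y - g x * f y - h x * h y) ∈ V)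
    (h2 : ∀ y : G, (fun x => f (x - y) - f (y - x)) ∈ V) (a : G) :
    oddPart g a • evenPart f + oddPart f a • evenPart g + oddPart h a • evenPart h ∈ V := by
  have hreflected : ∀ b : G, (fun x => f (-x) * g b + g (-x) * f b + h (-x) * h b
      - (f x * g (-b) + g x * f (-b) + h x * h (-b))) ∈ V := by
    intro b
    convert V.sub_mem (V.sub_mem (h1 (-b)) (hVneg _ (h1 b))) (h2 (-b)) using 1
    funext x
    simp only [Pi.sub_apply, sub_neg_eq_add, neg_sub_left, add_comm b x]
    ring
  convert V.smul_mem ((2 : K)⁻¹ ^ 2) (V.sub_mem (hreflected a) (hreflected (-a))) using 1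
  funext x
  simp only [oddPart, evenPart, Pi.add_apply, Pi.sub_apply, Pi.smul_apply, smul_eq_mul, neg_neg]
  ring

end

theorem stmt_5_general {G : Type*} [AddCommGroup G]
    (V : Submodule ℂ (G → ℂ))
    (hVneg : ∀ f : G → ℂ, f ∈ V → (fun x => f (-x)) ∈ V)
    (f g h : G → ℂ)
    (hho : (fun x => (h x - h (-x)) / 2) ∉ V)
    (hfo : (fun x : G => (f x - f (-x)) / 2) ≠ 0)
    (h1 : ∀ y : G, (fun x => f (x - y) - f x * g y - g x * f y - h x * h y) ∈ V)
    (h2 : ∀ y : G, (fun x => f (x - y) - f (y - x)) ∈ V) :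
    ∃ (η : ℂ) (φ : G → ℂ), φ ∈ V ∧ (∀ x : G, φ (-x) = φ x) ∧
      (∀ x : G, (g x + g (-x)) / 2 = η * ((f x + f (-x)) / 2) + φ x) := by
  have hfoV : oddPart f ∈ V := oddPart_mem_of_forall_sub_swap_mem h2
  obtain ⟨a, b, hab⟩ : ∃ a b, oddPart f a * oddPart h b - oddPart f b * oddPart h a ≠ 0 :=
    exists_mul_sub_mul_ne_zero hfo fun c hc =>
      hho ((congrArg (· ∈ V) hc).mpr (V.smul_mem c hfoV))
  obtain ⟨η, hη⟩ :=
    exists_sub_smul_mem_of_forall_add_smul_mem (oddPart_smul_evenPart_add_mem hVneg h1 h2) hab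
  refine ⟨η, evenPart g - η • evenPart f, hη, fun x => ?_, fun x => ?_⟩
  · simp only [Pi.sub_apply, Pi.smul_apply, evenPart_neg]
  · simp only [Pi.sub_apply, Pi.smul_apply, smul_eq_mul, evenPart]
    ring

theorem stmt_5 {G : Type*} [AddCommGroup G]
    (V : Submodule ℂ (G → ℂ))
    (hVtrans : ∀ f : G → ℂ, f ∈ V → ∀ y : G, (fun x => f (x + y)) ∈ V)
    (hVneg : ∀ f : G → ℂ, f ∈ V → (fun x => f (-x)) ∈ V)
    (f g h : G → ℂ)
    (hindep : ∀ c d : ℂ, (fun x => c * f x + d * h x) ∈ V → c = 0 ∧ d = 0)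
    (hho : (fun x => (h x - h (-x)) / 2) ∉ V)
    (hfo : (fun x : G => (f x - f (-x)) / 2) ≠ 0)
    (h1 : ∀ y : G, (fun x => f (x - y) - f x * g y - g x * f y - h x * h y) ∈ V)
    (h2 : ∀ y : G, (fun x => f (x - y) - f (y - x)) ∈ V) :
    ∃ (η : ℂ) (φ : G → ℂ), φ ∈ V ∧ (∀ x : G, φ (-x) = φ x) ∧
      (∀ x : G, (g x + g (-x)) / 2 = η * ((f x + f (-x)) / 2) + φ x) :=
  stmt_5_general V hVneg f g h hho hfo h1 h2
end

section
/- Let G be an abelian group, let b : G → ℂ be a bounded function, let λ ∈ ℂ∖{0} be a constant, and let f₀, g₀ : G → ℂ satisfy f₀(x+y) = f₀(x)f₀(y) − g₀(x)g₀(y) for all x, y ∈ G, with f₀(−x) = f₀(x) and g₀(−x) = −g₀(x) for all x ∈ G. Define f = λ²f₀ − λ²b, g = (1/2)f₀ + (1/2)b, and h = λg₀. Then the function (x,y) ↦ f(x−y) − f(x)g(y) − g(x)f(y) − h(x)h(y) is bounded on G×G. -/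
/-- A complex-valued function on `G` is bounded. -/
def Bdd {G : Type*} (F : G → ℂ) : Prop := ∃ C : ℝ, ∀ x : G, ‖F x‖ ≤ C

theorem cos_sub_formula_of_cos_add_formula {G R : Type*} [AddGroup G] [Ring R]
    {f₀ g₀ : G → R} (h₀ : ∀ x y : G, f₀ (x + y) = f₀ x * f₀ y - g₀ x * g₀ y)
    (hf₀ : ∀ x : G, f₀ (-x) = f₀ x) (hg₀ : ∀ x : G, g₀ (-x) = -g₀ x) (x y : G) :
    f₀ (x - y) = f₀ x * f₀ y + g₀ x * g₀ y := by
  rw [sub_eq_add_neg, h₀, hf₀, hg₀, mul_neg, sub_neg_eq_add]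

namespace Bdd

variable {α β : Type*} {F F' : α → ℂ}

theorem comp (hF : Bdd F) (φ : β → α) : Bdd (F ∘ φ) :=
  let ⟨C, hC⟩ := hF
  ⟨C, fun x => hC (φ x)⟩

theorem mul (hF : Bdd F) (hF' : Bdd F') : Bdd (F * F') := by
  obtain ⟨C, hC⟩ := hF
  obtain ⟨C', hC'⟩ := hF'
  refine ⟨C * C', fun x => ?_⟩
  rw [Pi.mul_apply, norm_mul]
  exact mul_le_mul (hC x) (hC' x) (norm_nonneg _) ((norm_nonneg _).trans (hC x))

theorem sub (hF : Bdd F) (hF' : Bdd F') : Bdd (F - F') := by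
  obtain ⟨C, hC⟩ := hF
  obtain ⟨C', hC'⟩ := hF'
  exact ⟨C + C', fun x => norm_sub_le_of_le (hC x) (hC' x)⟩

theorem const_mul (hF : Bdd F) (c : ℂ) : Bdd fun x => c * F x := by
  obtain ⟨C, hC⟩ := hF
  refine ⟨‖c‖ * C, fun x => ?_⟩
  rw [norm_mul]
  exact mul_le_mul_of_nonneg_left (hC x) (norm_nonneg c)

end Bdd

theorem stmt_12_general {G : Type*} [AddCommGroup G]
    (b f₀ g₀ : G → ℂ) (lam : ℂ)
    (hb : Bdd b)
    (h₀ : ∀ x y : G, f₀ (x + y) = f₀ x * f₀ y - g₀ x * g₀ y)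
    (hf₀ : ∀ x : G, f₀ (-x) = f₀ x) (hg₀ : ∀ x : G, g₀ (-x) = -g₀ x)
    (f g h : G → ℂ)
    (hf : ∀ x : G, f x = lam ^ 2 * f₀ x - lam ^ 2 * b x)
    (hg : ∀ x : G, g x = (1 / 2) * f₀ x + (1 / 2) * b x)
    (hh : ∀ x : G, h x = lam * g₀ x) :
    ∃ C : ℝ, ∀ x y : G,
      ‖f (x - y) - f x * g y - g x * f y - h x * h y‖ ≤ C := by
  have hbdd : Bdd fun p : G × G => lam ^ 2 * (b p.1 * b p.2 - b (p.1 - p.2)) :=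
    (((hb.comp Prod.fst).mul (hb.comp Prod.snd)).sub
      (hb.comp fun p : G × G => p.1 - p.2)).const_mul _
  obtain ⟨C, hC⟩ := hbdd
  refine ⟨C, fun x y => le_of_eq_of_le (congrArg norm ?_) (hC (x, y))⟩
  -- the subtraction formula for `f₀` cancels every term not involving `b`
  rw [hf, hf, hf, hg, hg, hh, hh, cos_sub_formula_of_cos_add_formula h₀ hf₀ hg₀]
  ring

theorem stmt_12 {G : Type*} [AddCommGroup G]
    (b f₀ g₀ : G → ℂ) (lam : ℂ)
    (hb : Bdd b) (hlam : lam ≠ 0)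
    (h₀ : ∀ x y : G, f₀ (x + y) = f₀ x * f₀ y - g₀ x * g₀ y)
    (hf₀ : ∀ x : G, f₀ (-x) = f₀ x) (hg₀ : ∀ x : G, g₀ (-x) = -g₀ x)
    (f g h : G → ℂ)
    (hf : ∀ x : G, f x = lam ^ 2 * f₀ x - lam ^ 2 * b x)
    (hg : ∀ x : G, g x = (1 / 2) * f₀ x + (1 / 2) * b x)
    (hh : ∀ x : G, h x = lam * g₀ x) :
    ∃ C : ℝ, ∀ x y : G,
      ‖f (x - y) - f x * g y - g x * f y - h x * h y‖ ≤ C :=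
  stmt_12_general b f₀ g₀ lam hb h₀ hf₀ hg₀ f g h hf hg hh
end
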